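/- arXiv:1007.1546 — 3 statements merged into one kernel-verified Lean document; each statement's English description precedes it below -/
import Mathlib

section
/- Let A₁, A₂ be 2×2 complex matrices with trace zero satisfying A₁² = A₁A₂ = A₂A₁ = A₂² = 0 and [A₁,A₂] = 0, and let v₁, v₂ ∈ ℂ². Define ξ₀ = det(v₁|v₂), ξ₁ = det(A₁v₁|v₁), ξ₂ = det(A₂v₁|v₁), ξ₃ = det(A₁v₁|v₂), ξ₄ = det(A₂v₁|v₂), ξ₅ = det(A₁v₂|v₂), ξ₆ = det(A₂v₂|v₂). Then the relations ξ₁ξ₄ − ξ₂ξ₃ = 0, ξ₃ξ₆ − ξ₄ξ₅ = 0, ξ₁ξ₆ − ξ₃ξ₄ = 0, ξ₁ξ₆ − ξ₂ξ₅ = 0, ξ₃² − ξ₁ξ₅ = 0, and ξ₄² − ξ₂ξ₆ = 0 all hold. -/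
open Matrix

/-- `detCols u w` is the determinant of the 2×2 matrix with columns `u` and `w`. -/
def detCols (u w : Fin 2 → ℂ) : ℂ := u 0 * w 1 - u 1 * w 0

/-- The six quadratic relations among the `SL(Q)`-invariants `ξ₀,…,ξ₆` hold for any
commuting square-zero pair `(A₁,A₂)` of traceless 2×2 matrices and vectors `v₁,v₂`. -/
theorem xi_relations (A₁ A₂ : Matrix (Fin 2) (Fin 2) ℂ) (v₁ v₂ : Fin 2 → ℂ)
    (htr₁ : A₁.trace = 0) (htr₂ : A₂.trace = 0)
    (h11 : A₁ * A₁ = 0) (h12 : A₁ * A₂ = 0) (h21 : A₂ * A₁ = 0) (h22 : A₂ * A₂ = 0)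
    (hcomm : A₁ * A₂ - A₂ * A₁ = 0) :
    let ξ₀ := detCols v₁ v₂
    let ξ₁ := detCols (A₁.mulVec v₁) v₁
    let ξ₂ := detCols (A₂.mulVec v₁) v₁
    let ξ₃ := detCols (A₁.mulVec v₁) v₂
    let ξ₄ := detCols (A₂.mulVec v₁) v₂
    let ξ₅ := detCols (A₁.mulVec v₂) v₂
    let ξ₆ := detCols (A₂.mulVec v₂) v₂
    ξ₁ * ξ₄ - ξ₂ * ξ₃ = 0 ∧ ξ₃ * ξ₆ - ξ₄ * ξ₅ = 0 ∧
    ξ₁ * ξ₆ - ξ₃ * ξ₄ = 0 ∧ ξ₁ * ξ₆ - ξ₂ * ξ₅ = 0 ∧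
    ξ₃ ^ 2 - ξ₁ * ξ₅ = 0 ∧ ξ₄ ^ 2 - ξ₂ * ξ₆ = 0 := by
  intro ξ₀ ξ₁ ξ₂ ξ₃ ξ₄ ξ₅ ξ₆
  have t1 : A₁ 0 0 + A₁ 1 1 = 0 := by simpa [Matrix.trace, Fin.sum_univ_two] using htr₁
  have t2 : A₂ 0 0 + A₂ 1 1 = 0 := by simpa [Matrix.trace, Fin.sum_univ_two] using htr₂
  have hd1 : A₁ 1 1 = -A₁ 0 0 := by linear_combination t1
  have hd2 : A₂ 1 1 = -A₂ 0 0 := by linear_combination t2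
  set a := A₁ 0 0 with ha
  set b := A₁ 0 1 with hb
  set c := A₁ 1 0 with hc
  set p := A₂ 0 0 with hp
  set q := A₂ 0 1 with hq
  set r := A₂ 1 0 with hr
  have H1 : a * a + b * c = 0 := by
    have e := congrFun (congrFun h11 0) 0
    simpa [Matrix.mul_apply, Fin.sum_univ_two] using e
  have H2 : p * p + q * r = 0 := by
    have e := congrFun (congrFun h22 0) 0
    simpa [Matrix.mul_apply, Fin.sum_univ_two] using e
  have H3 : a * p + b * r = 0 := by
    have e := congrFun (congrFun h12 0) 0
    simpa [Matrix.mul_apply, Fin.sum_univ_two] using e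
  have H4 : a * q - b * p = 0 := by
    have e := congrFun (congrFun h12 0) 1
    simp [Matrix.mul_apply, Fin.sum_univ_two, hd2] at e
    linear_combination e
  have H5 : c * p - a * r = 0 := by
    have e := congrFun (congrFun h12 1) 0
    simp [Matrix.mul_apply, Fin.sum_univ_two, hd1] at e
    linear_combination e
  have H6 : c * q + a * p = 0 := by
    have e := congrFun (congrFun h12 1) 1
    simp [Matrix.mul_apply, Fin.sum_univ_two, hd1, hd2] at e
    linear_combination e
  have H7 : p * a + q * c = 0 := by
    have e := congrFun (congrFun h21 0) 0
    simpa [Matrix.mul_apply, Fin.sum_univ_two] using e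
  set x := v₁ 0 with hx
  set y := v₁ 1 with hy
  set z := v₂ 0 with hz
  set w := v₂ 1 with hw
  simp only [ξ₁, ξ₂, ξ₃, ξ₄, ξ₅, ξ₆, detCols, Matrix.mulVec, dotProduct,
    Fin.sum_univ_two, hd1, hd2]
  refine ⟨?_, ?_, ?_, ?_, ?_, ?_⟩
  · linear_combination (x^2*y*w - x*y^2*z) * (H3 - H6) + (x*y^2*w - y^3*z) * H4 +
      (x^2*y*z - x^3*w) * H5
  · linear_combination (z*w^2*x - z^2*w*y) * (H3 - H6) + (w^3*x - z*w^2*y) * H4 +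
      (z^3*y - z^2*w*x) * H5
  · linear_combination (x*w - y*z) * (y*z*H3 + y*w*H4 - x*z*H5 - x*w*H6)
  · linear_combination (x*w - y*z) * (y*z*(H3 - H7) + 2*y*w*H4 - 2*x*z*H5 + x*w*(H3 - H6))
  · linear_combination (x*w - y*z)^2 * H1
  · linear_combination (x*w - y*z)^2 * H2
end

section
/- Let B₁, B₂, X₁, X₂ be 2×2 traceless complex matrices such that B₁² = B₁B₂ = B₂B₁ = B₂² = 0 and X₁² = X₁X₂ = X₂X₁ = X₂² = 0. Set ζ₁ = tr(B₁X₁), ζ₂ = tr(B₂X₁), ζ₃ = tr(B₁X₂), ζ₄ = tr(B₂X₂). Then ζ₁ζ₄ − ζ₂ζ₃ = 0. -/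
open Matrix

lemma anticomm_traceless (M N : Matrix (Fin 2) (Fin 2) ℂ)
    (hM : M.trace = 0) (hN : N.trace = 0) :
    M * N + N * M = (M * N).trace • (1 : Matrix (Fin 2) (Fin 2) ℂ) := by
  have hM' : M 1 1 = -M 0 0 := by
    have := hM; simp [Matrix.trace, Fin.sum_univ_two, Matrix.diag] at this; linear_combination this
  have hN' : N 1 1 = -N 0 0 := by
    have := hN; simp [Matrix.trace, Fin.sum_univ_two, Matrix.diag] at this; linear_combination this
  ext i j
  fin_cases i <;> fin_cases j <;>
    simp [Matrix.mul_apply, Matrix.trace, Matrix.diag, Fin.sum_univ_two, Matrix.one_apply,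
      hM', hN'] <;> ring

theorem zeta_relation (B₁ B₂ X₁ X₂ : Matrix (Fin 2) (Fin 2) ℂ)
    (htB₁ : B₁.trace = 0) (htB₂ : B₂.trace = 0)
    (htX₁ : X₁.trace = 0) (htX₂ : X₂.trace = 0)
    (hB11 : B₁ * B₁ = 0) (hB12 : B₁ * B₂ = 0) (hB21 : B₂ * B₁ = 0) (hB22 : B₂ * B₂ = 0)
    (hX11 : X₁ * X₁ = 0) (hX12 : X₁ * X₂ = 0) (hX21 : X₂ * X₁ = 0) (hX22 : X₂ * X₂ = 0) :
    (B₁ * X₁).trace * (B₂ * X₂).trace - (B₂ * X₁).trace * (B₁ * X₂).trace = 0 := by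
  have h1 : X₁ * B₂ = (X₁ * B₂).trace • 1 - B₂ * X₁ := by
    exact eq_sub_of_add_eq (anticomm_traceless X₁ B₂ htX₁ htB₂)
  have h2 : B₂ * X₂ = (B₂ * X₂).trace • 1 - X₂ * B₂ := by
    exact eq_sub_of_add_eq (anticomm_traceless B₂ X₂ htB₂ htX₂)
  have key1 : B₁ * X₁ * B₂ * X₂ = (X₁ * B₂).trace • (B₁ * X₂) := by
    calc B₁ * X₁ * B₂ * X₂ = B₁ * (X₁ * B₂) * X₂ := by noncomm_ring
    _ = B₁ * ((X₁ * B₂).trace • 1 - B₂ * X₁) * X₂ := by rw [← h1]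
    _ = (X₁ * B₂).trace • (B₁ * X₂) - (B₁ * B₂) * (X₁ * X₂) := by
        simp [mul_sub, sub_mul, Matrix.mul_smul, Matrix.smul_mul]; noncomm_ring
    _ = (X₁ * B₂).trace • (B₁ * X₂) := by rw [hB12]; simp
  have key2 : B₁ * X₁ * B₂ * X₂ = (B₂ * X₂).trace • (B₁ * X₁) := by
    calc B₁ * X₁ * B₂ * X₂ = B₁ * X₁ * (B₂ * X₂) := by noncomm_ring
    _ = B₁ * X₁ * ((B₂ * X₂).trace • 1 - X₂ * B₂) := by rw [← h2]
    _ = (B₂ * X₂).trace • (B₁ * X₁) - B₁ * (X₁ * X₂) * B₂ := by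
        simp [mul_sub, Matrix.mul_smul]; noncomm_ring
    _ = (B₂ * X₂).trace • (B₁ * X₁) := by rw [hX12]; simp
  have := congrArg Matrix.trace (key1.symm.trans key2)
  simp only [Matrix.trace_smul, smul_eq_mul] at this
  rw [Matrix.trace_mul_comm X₁ B₂] at this
  linear_combination -this
end

section
/- Let ρ: ℂ[t₁,…,t₈] → ℂ[z₁,…,z₈] be the ring homomorphism sending t₁ ↦ z₁, t₂ ↦ z₂, t₃ ↦ z₃z₅, t₄ ↦ z₃z₆, t₅ ↦ z₄z₅, t₆ ↦ z₄z₆, t₇ ↦ z₇, t₈ ↦ z₈, and let I = (z₁+z₇, z₂+z₈, z₆z₇−z₅z₈, z₄z₇−z₃z₈, z₄z₆+z₈², z₃z₆+z₇z₈, z₄z₅+z₇z₈, z₃z₅+z₇²). Then ρ^{-1}(I) = (t₁+t₇, t₂+t₈, t₃+t₇², t₄−t₅, t₅+t₇t₈, t₆+t₈²), and the quotient ℂ[t₁,…,t₈]/ρ^{-1}(I) is isomorphic to the polynomial ring ℂ[t₇,t₈]. -/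
open MvPolynomial

-- `t₁,…,t₈` and `z₁,…,z₈` are the variables `X 0,…,X 7` of two copies of the
-- polynomial ring `ℂ[x₀,…,x₇]`.

/-- `ρ : ℂ[t₁,…,t₈] → ℂ[z₁,…,z₈]`, `t₁ ↦ z₁, t₂ ↦ z₂, t₃ ↦ z₃z₅, t₄ ↦ z₃z₆,
`t₅ ↦ z₄z₅, t₆ ↦ z₄z₆, t₇ ↦ z₇, t₈ ↦ z₈`. -/
noncomputable def rho : MvPolynomial (Fin 8) ℂ →ₐ[ℂ] MvPolynomial (Fin 8) ℂ :=
  aeval ![X 0, X 1, X 2 * X 4, X 2 * X 5, X 3 * X 4, X 3 * X 5, X 6, X 7]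

/-- The ideal `I = (z₁+z₇, z₂+z₈, z₆z₇−z₅z₈, z₄z₇−z₃z₈, z₄z₆+z₈², z₃z₆+z₇z₈,
z₄z₅+z₇z₈, z₃z₅+z₇²)`. -/
noncomputable def Iideal : Ideal (MvPolynomial (Fin 8) ℂ) :=
  Ideal.span
    {X 0 + X 6, X 1 + X 7, X 5 * X 6 - X 4 * X 7, X 3 * X 6 - X 2 * X 7,
     X 3 * X 5 + X 7 ^ 2, X 2 * X 5 + X 6 * X 7, X 3 * X 4 + X 6 * X 7,
     X 2 * X 4 + X 6 ^ 2}

@[simp] lemma vec8_five {α : Type*} (a0 a1 a2 a3 a4 a5 a6 a7 : α) :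
    ![a0,a1,a2,a3,a4,a5,a6,a7] 5 = a5 := rfl
@[simp] lemma vec8_six {α : Type*} (a0 a1 a2 a3 a4 a5 a6 a7 : α) :
    ![a0,a1,a2,a3,a4,a5,a6,a7] 6 = a6 := rfl
@[simp] lemma vec8_seven {α : Type*} (a0 a1 a2 a3 a4 a5 a6 a7 : α) :
    ![a0,a1,a2,a3,a4,a5,a6,a7] 7 = a7 := rfl


noncomputable def phi : MvPolynomial (Fin 8) ℂ →ₐ[ℂ] MvPolynomial (Fin 2) ℂ :=
  aeval ![-X 0, -X 1, -X 0^2, -(X 0*X 1), -(X 0*X 1), -X 1^2, X 0, X 1]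

noncomputable def psi : MvPolynomial (Fin 8) ℂ →ₐ[ℂ] MvPolynomial (Fin 2) ℂ :=
  aeval ![-X 0, -X 1, -X 0, -X 1, X 0, X 1, X 0, X 1]

noncomputable def sig : MvPolynomial (Fin 8) ℂ →ₐ[ℂ] MvPolynomial (Fin 8) ℂ :=
  aeval ![-X 6, -X 7, -X 6^2, -(X 6*X 7), -(X 6*X 7), -X 7^2, X 6, X 7]

noncomputable def gmap : MvPolynomial (Fin 2) ℂ →ₐ[ℂ] MvPolynomial (Fin 8) ℂ :=
  aeval ![X 6, X 7]

noncomputable def Jideal : Ideal (MvPolynomial (Fin 8) ℂ) :=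
  Ideal.span
    {X 0 + X 6, X 1 + X 7, X 2 + X 6 ^ 2, X 3 - X 4,
     X 4 + X 6 * X 7, X 5 + X 7 ^ 2}

lemma memJ_X_sub_sig (n : Fin 8) : X n - sig (X n) ∈ Jideal := by
  have h0 : X 0 + X 6 ∈ Jideal := Ideal.subset_span (by left; rfl)
  have h1 : X 1 + X 7 ∈ Jideal := Ideal.subset_span (by right; left; rfl)
  have h2 : X 2 + X 6 ^ 2 ∈ Jideal := Ideal.subset_span (by right; right; left; rfl)
  have h3 : X 3 - X 4 ∈ Jideal := Ideal.subset_span (by right; right; right; left; rfl)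
  have h4 : X 4 + X 6 * X 7 ∈ Jideal :=
    Ideal.subset_span (by right; right; right; right; left; rfl)
  have h5 : X 5 + X 7 ^ 2 ∈ Jideal :=
    Ideal.subset_span (by right; right; right; right; right; rfl)
  fin_cases n <;> simp [sig, sub_neg_eq_add]
  · exact h0
  · exact h1
  · exact h2
  · have : (X 3 + X 6 * X 7 : MvPolynomial (Fin 8) ℂ) = (X 3 - X 4) + (X 4 + X 6 * X 7) := by ring
    rw [this]; exact add_mem h3 h4
  · exact h4
  · exact h5

lemma key (p : MvPolynomial (Fin 8) ℂ) : p - sig p ∈ Jideal := by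
  induction p using MvPolynomial.induction_on with
  | C a => simp
  | add p q hp hq =>
      have : p + q - sig (p + q) = (p - sig p) + (q - sig q) := by
        rw [map_add]; ring
      rw [this]; exact add_mem hp hq
  | mul_X p n hp =>
      have : p * X n - sig (p * X n) =
          (p - sig p) * sig (X n) + p * (X n - sig (X n)) := by
        rw [map_mul]; ring
      rw [this]
      exact add_mem (Ideal.mul_mem_right _ _ hp)
        (Ideal.mul_mem_left _ _ (memJ_X_sub_sig n))

lemma sig_eq : sig = gmap.comp phi := by
  apply MvPolynomial.algHom_ext
  intro i
  fin_cases i <;> simp [sig, gmap, phi]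

lemma phi_comp_gmap : phi.comp gmap = AlgHom.id ℂ _ := by
  apply MvPolynomial.algHom_ext
  intro i
  fin_cases i <;> simp [gmap, phi]

lemma psi_comp_rho : psi.comp rho = phi := by
  apply MvPolynomial.algHom_ext
  intro i
  fin_cases i <;> simp [psi, rho, phi] <;> ring

lemma J_le_ker : Jideal ≤ RingHom.ker (phi : _ →+* MvPolynomial (Fin 2) ℂ) := by
  rw [Jideal, Ideal.span_le]
  rintro x (rfl | rfl | rfl | rfl | rfl | rfl) <;>
    simp [RingHom.mem_ker, phi] <;> try ring

lemma ker_le_J : RingHom.ker (phi : _ →+* MvPolynomial (Fin 2) ℂ) ≤ Jideal := by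
  intro p hp
  rw [RingHom.mem_ker] at hp
  have hp' : phi p = 0 := hp
  have hs : sig p = 0 := by
    rw [sig_eq]
    show gmap (phi p) = 0
    rw [hp', map_zero]
  have := key p
  rwa [hs, sub_zero] at this

lemma ker_phi : RingHom.ker (phi : _ →+* MvPolynomial (Fin 2) ℂ) = Jideal :=
  le_antisymm ker_le_J J_le_ker

lemma I_le_ker_psi : Iideal ≤ RingHom.ker (psi : _ →+* MvPolynomial (Fin 2) ℂ) := by
  rw [Iideal, Ideal.span_le]
  rintro x (rfl | rfl | rfl | rfl | rfl | rfl | rfl | rfl) <;>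
    simp [RingHom.mem_ker, psi] <;> try ring

lemma comap_eq : Ideal.comap (rho : MvPolynomial (Fin 8) ℂ →+* MvPolynomial (Fin 8) ℂ) Iideal = Jideal := by
  apply le_antisymm
  · intro p hp
    rw [Ideal.mem_comap] at hp
    have hpsi : psi (rho p) = 0 := I_le_ker_psi hp
    have hphi : phi p = 0 := by
      rw [← psi_comp_rho]; exact hpsi
    exact ker_le_J hphi
  · rw [Jideal, Ideal.span_le]
    have m0 : X 0 + X 6 ∈ Iideal := Ideal.subset_span (by left; rfl)
    have m1 : X 1 + X 7 ∈ Iideal := Ideal.subset_span (by right; left; rfl)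
    have m4 : (X 3 * X 5 + X 7 ^ 2 : MvPolynomial (Fin 8) ℂ) ∈ Iideal :=
      Ideal.subset_span (by right; right; right; right; left; rfl)
    have m5 : (X 2 * X 5 + X 6 * X 7 : MvPolynomial (Fin 8) ℂ) ∈ Iideal :=
      Ideal.subset_span (by right; right; right; right; right; left; rfl)
    have m6 : (X 3 * X 4 + X 6 * X 7 : MvPolynomial (Fin 8) ℂ) ∈ Iideal :=
      Ideal.subset_span (by right; right; right; right; right; right; left; rfl)
    have m7 : (X 2 * X 4 + X 6 ^ 2 : MvPolynomial (Fin 8) ℂ) ∈ Iideal :=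
      Ideal.subset_span (by right; right; right; right; right; right; right; rfl)
    rintro x (rfl | rfl | rfl | rfl | rfl | rfl) <;>
      rw [SetLike.mem_coe, Ideal.mem_comap, RingHom.coe_coe]
    · simpa [rho] using m0
    · simpa [rho] using m1
    · simpa [rho] using m7
    · have : rho (X 3 - X 4) = (X 2 * X 5 + X 6 * X 7) - (X 3 * X 4 + X 6 * X 7) := by
        simp [rho]; try ring
      rw [this]; exact sub_mem m5 m6
    · simpa [rho] using m6
    · simpa [rho] using m4

lemma phi_surj : Function.Surjective (phi : MvPolynomial (Fin 8) ℂ →+* MvPolynomial (Fin 2) ℂ) := by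
  intro q
  refine ⟨gmap q, ?_⟩
  have := congrArg (fun f => (f : _ →ₐ[ℂ] _) q) phi_comp_gmap
  simpa using this

/-- The contraction `ρ⁻¹(I)` is `(t₁+t₇, t₂+t₈, t₃+t₇², t₄−t₅, t₅+t₇t₈, t₆+t₈²)`,
and the corresponding quotient is a polynomial ring in the two variables `t₇, t₈`. -/
theorem comap_rho_I :
    Ideal.comap (rho : MvPolynomial (Fin 8) ℂ →+* MvPolynomial (Fin 8) ℂ) Iideal =
      Ideal.span
        {X 0 + X 6, X 1 + X 7, X 2 + X 6 ^ 2, X 3 - X 4,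
         X 4 + X 6 * X 7, X 5 + X 7 ^ 2} ∧
    Nonempty
      ((MvPolynomial (Fin 8) ℂ ⧸
          Ideal.comap (rho : MvPolynomial (Fin 8) ℂ →+* MvPolynomial (Fin 8) ℂ) Iideal)
        ≃+* MvPolynomial (Fin 2) ℂ) := by
  refine ⟨comap_eq, ?_⟩
  rw [comap_eq, ← ker_phi]
  exact ⟨RingHom.quotientKerEquivOfSurjective phi_surj⟩
end
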